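/- arXiv:1403.7170 — 2 statements merged into one kernel-verified Lean document; each statement's English description precedes it below -/
import Mathlib

section
/- Let $x : [t_0, t_1] \to \mathbb{R}^n$ be a $C^1$ solution of $x' = f(t,x)$ and let $y : [t_0, t_1] \to \mathbb{R}^n$ be a $C^1$ function satisfying $\|y'(t) - f(t, y(t))\| \leq \delta$ for all $t$. Assume the logarithmic norm of $\partial f/\partial z(t,z)$ is bounded above by $l \neq 0$ on a convex set containing both curves. Then for $t \in [t_0, t_1]$, $\|x(t) - y(t)\| \leq e^{l(t-t_0)} \|x(t_0) - y(t_0)\| + \delta \, (e^{l(t-t_0)} - 1)/l$. -/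
/-!
A logarithmic-norm bound `μ(∂f/∂z) ≤ l` on a convex set gives the one-sided Lipschitz condition
`⟪f(t,a) - f(t,b), a - b⟫ ≤ l ‖a - b‖²` there. The error `e = x - y` then satisfies
`⟪e, e'⟫ ≤ l ‖e‖² + δ ‖e‖`, so the upper right Dini derivative of `‖e‖` is at most `l ‖e‖ + δ`,
and Gronwall's inequality for Dini derivatives gives the estimate.
-/

/-- The logarithmic norm of a linear operator `A` (with respect to the norm of
`E`) is bounded above by `l`:
`μ(A) = lim_{h → 0⁺} (‖I + h A‖ - 1)/h ≤ l`. -/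
def LogNormBoundedBy {E : Type*} [NormedAddCommGroup E] [NormedSpace ℝ E]
    (A : E →L[ℝ] E) (l : ℝ) : Prop :=
  ∀ ε > 0, ∃ δ > 0, ∀ h : ℝ, 0 < h → h < δ →
    (‖ContinuousLinearMap.id ℝ E + h • A‖ - 1) / h ≤ l + ε

open Set Filter
open scoped Topology RealInnerProductSpace

section InnerProductSpace

variable {E : Type*} [NormedAddCommGroup E] [InnerProductSpace ℝ E]

lemma LogNormBoundedBy.inner_apply_self_le {A : E →L[ℝ] E} {l : ℝ} (hA : LogNormBoundedBy A l)
    (u : E) : ⟪A u, u⟫ ≤ l * ‖u‖ ^ 2 := by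
  have key : ∀ ε > 0, ⟪A u, u⟫ ≤ (l + ε) * ‖u‖ ^ 2 := by
    intro ε hε
    obtain ⟨d, hd, hbd⟩ := hA ε hε
    set h := d / 2
    have hh : 0 < h := half_pos hd
    have hnorm : ‖ContinuousLinearMap.id ℝ E + h • A‖ ≤ 1 + h * (l + ε) := by
      have := (div_le_iff₀ hh).1 (hbd h hh (half_lt_self hd))
      linarith
    have : ‖u‖ ^ 2 + h * ⟪A u, u⟫ ≤ (1 + h * (l + ε)) * ‖u‖ ^ 2 :=
      calc ‖u‖ ^ 2 + h * ⟪A u, u⟫ = ⟪(ContinuousLinearMap.id ℝ E + h • A) u, u⟫ := by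
            simp [inner_add_left, real_inner_smul_left]
        _ ≤ ‖(ContinuousLinearMap.id ℝ E + h • A) u‖ * ‖u‖ := real_inner_le_norm _ _
        _ ≤ ‖ContinuousLinearMap.id ℝ E + h • A‖ * ‖u‖ * ‖u‖ := by
            gcongr; exact ContinuousLinearMap.le_opNorm _ _
        _ ≤ (1 + h * (l + ε)) * ‖u‖ ^ 2 := by rw [mul_assoc, ← sq]; gcongr
    nlinarith
  have hlim : Tendsto (fun ε => (l + ε) * ‖u‖ ^ 2) (𝓝[>] 0) (𝓝 (l * ‖u‖ ^ 2)) := by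
    apply tendsto_nhdsWithin_of_tendsto_nhds
    have hcont : Continuous fun ε : ℝ => (l + ε) * ‖u‖ ^ 2 := by fun_prop
    simpa using hcont.tendsto 0
  exact ge_of_tendsto hlim (eventually_nhdsWithin_of_forall key)

lemma Convex.inner_sub_le_of_inner_fderiv_le {g : E → E} {Dg : E → E →L[ℝ] E} {W : Set E}
    (hW : Convex ℝ W) (hg : ∀ z ∈ W, HasFDerivAt g (Dg z) z) {l : ℝ}
    (hDg : ∀ z ∈ W, ∀ v, ⟪Dg z v, v⟫ ≤ l * ‖v‖ ^ 2) {a b : E} (ha : a ∈ W) (hb : b ∈ W) :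
    ⟪g b - g a, b - a⟫ ≤ l * ‖b - a‖ ^ 2 := by
  set v := b - a
  have hseg : ∀ s ∈ Icc (0 : ℝ) 1, a + s • v ∈ W := fun s hs => hW.add_smul_sub_mem ha hb hs
  have hφ : ∀ s ∈ Icc (0 : ℝ) 1,
      HasDerivAt (fun s : ℝ => ⟪g (a + s • v), v⟫) ⟪Dg (a + s • v) v, v⟫ s := by
    intro s hs
    have hline : HasDerivAt (fun s : ℝ => a + s • v) v s := by
      simpa using ((hasDerivAt_id s).smul_const v).const_add a
    simpa using ((hg _ (hseg s hs)).comp_hasDerivAt s hline).inner ℝ (hasDerivAt_const s v)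
  have := (convex_Icc (0 : ℝ) 1).image_sub_le_mul_sub_of_deriv_le
    (fun s hs => (hφ s hs).continuousAt.continuousWithinAt)
    (fun s hs => (hφ s (interior_subset hs)).differentiableAt.differentiableWithinAt)
    (fun s hs => (hφ s (interior_subset hs)).deriv ▸ hDg _ (hseg s (interior_subset hs)) v)
    0 (left_mem_Icc.2 zero_le_one) 1 (right_mem_Icc.2 zero_le_one) zero_le_one
  simpa [v, inner_sub_left] using this

theorem HasDerivAt.norm {u : ℝ → E} {u' : E} {s : ℝ} (hu : HasDerivAt u u' s) (h0 : u s ≠ 0) :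
    HasDerivAt (fun t => ‖u t‖) (⟪u s, u'⟫ / ‖u s‖) s := by
  have h := hu.norm_sq.sqrt (pow_ne_zero 2 (norm_ne_zero_iff.2 h0))
  simp only [Real.sqrt_sq (norm_nonneg _)] at h
  convert h using 1
  field_simp

lemma HasDerivAt.eventually_slope_norm_lt {u : ℝ → E} {u' : E} {s r : ℝ} (hu : HasDerivAt u u' s)
    (hr : ‖u'‖ < r) : ∀ᶠ z in 𝓝[>] s, (z - s)⁻¹ * (‖u z‖ - ‖u s‖) < r := by
  have hlim : Tendsto (fun z => ‖slope u s z‖) (𝓝[>] s) (𝓝 ‖u'‖) :=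
    ((hasDerivAt_iff_tendsto_slope.1 hu).mono_left
      (nhdsWithin_mono s fun z hz => ne_of_gt hz)).norm
  filter_upwards [hlim.eventually_lt_const hr, self_mem_nhdsWithin] with z hz hzs
  have hpos : 0 ≤ (z - s)⁻¹ := inv_nonneg.2 (sub_nonneg.2 (le_of_lt hzs))
  calc (z - s)⁻¹ * (‖u z‖ - ‖u s‖) ≤ (z - s)⁻¹ * ‖u z - u s‖ := by
        gcongr; exact norm_sub_norm_le _ _
    _ = ‖slope u s z‖ := by
        rw [slope_def_module, norm_smul, Real.norm_of_nonneg hpos]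
    _ < r := hz

lemma HasDerivAt.eventually_slope_norm_lt_of_inner_le {u : ℝ → E} {u' : E} {s K δ r : ℝ}
    (hu : HasDerivAt u u' s) (hinner : ⟪u s, u'⟫ ≤ K * ‖u s‖ ^ 2 + δ * ‖u s‖)
    (hzero : u s = 0 → ‖u'‖ ≤ δ) (hr : K * ‖u s‖ + δ < r) :
    ∀ᶠ z in 𝓝[>] s, (z - s)⁻¹ * (‖u z‖ - ‖u s‖) < r := by
  -- `‖u‖` is differentiable only where `u ≠ 0`; at a zero its slope is bounded by `‖u'‖`.
  rcases eq_or_ne (u s) 0 with h0 | h0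
  · exact hu.eventually_slope_norm_lt ((hzero h0).trans_lt (by simpa [h0] using hr))
  · have hpos : 0 < ‖u s‖ := norm_pos_iff.2 h0
    have hlt : ⟪u s, u'⟫ / ‖u s‖ < r := by
      rw [div_lt_iff₀ hpos]; nlinarith
    have hlim := (hasDerivAt_iff_tendsto_slope.1 (hu.norm h0)).mono_left
      (nhdsWithin_mono s fun z hz => ne_of_gt hz)
    filter_upwards [hlim.eventually_lt_const hlt] with z hz
    rwa [slope_def_field, div_eq_inv_mul] at hz

theorem norm_le_gronwallBound_of_inner_deriv_le {u u' : ℝ → E} {K δ a b : ℝ}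
    (hu : ∀ s ∈ Icc a b, HasDerivAt u (u' s) s)
    (hinner : ∀ s ∈ Ico a b, ⟪u s, u' s⟫ ≤ K * ‖u s‖ ^ 2 + δ * ‖u s‖)
    (hzero : ∀ s ∈ Ico a b, u s = 0 → ‖u' s‖ ≤ δ) :
    ∀ t ∈ Icc a b, ‖u t‖ ≤ gronwallBound ‖u a‖ K δ (t - a) :=
  le_gronwallBound_of_liminf_deriv_right_le (f' := fun s => K * ‖u s‖ + δ)
    (fun s hs => (hu s hs).continuousAt.norm.continuousWithinAt)
    (fun s hs _ hr => ((hu s (Ico_subset_Icc_self hs)).eventually_slope_norm_lt_of_inner_le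
      (hinner s hs) (hzero s hs) hr).frequently)
    le_rfl (fun _ _ => le_rfl)

end InnerProductSpace

theorem lognorm_approx_solution_estimate_general {n : ℕ}
    (t0 t1 : ℝ)
    (f : ℝ → EuclideanSpace ℝ (Fin n) → EuclideanSpace ℝ (Fin n))
    (Df : ℝ → EuclideanSpace ℝ (Fin n) →
      (EuclideanSpace ℝ (Fin n) →L[ℝ] EuclideanSpace ℝ (Fin n)))
    (hDf : ∀ t z, HasFDerivAt (f t) (Df t z) z)
    (W : Set (EuclideanSpace ℝ (Fin n))) (hW : Convex ℝ W)
    (l : ℝ) (hl0 : l ≠ 0)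
    (hl : ∀ t ∈ Set.Icc t0 t1, ∀ z ∈ W, LogNormBoundedBy (Df t z) l)
    (x y : ℝ → EuclideanSpace ℝ (Fin n))
    (y' : ℝ → EuclideanSpace ℝ (Fin n))
    (δ : ℝ)
    (hx : ∀ t ∈ Set.Icc t0 t1, HasDerivAt x (f t (x t)) t)
    (hy : ∀ t ∈ Set.Icc t0 t1, HasDerivAt y (y' t) t)
    (hdefect : ∀ t ∈ Set.Icc t0 t1, ‖y' t - f t (y t)‖ ≤ δ)
    (hxW : ∀ t ∈ Set.Icc t0 t1, x t ∈ W)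
    (hyW : ∀ t ∈ Set.Icc t0 t1, y t ∈ W) :
    ∀ t ∈ Set.Icc t0 t1,
      ‖x t - y t‖ ≤ Real.exp (l * (t - t0)) * ‖x t0 - y t0‖ +
        δ * (Real.exp (l * (t - t0)) - 1) / l := by
  intro t ht
  have hinner : ∀ s ∈ Ico t0 t1,
      ⟪x s - y s, f s (x s) - y' s⟫ ≤ l * ‖x s - y s‖ ^ 2 + δ * ‖x s - y s‖ := by
    intro s hs
    have hsI := Ico_subset_Icc_self hs
    have hmono : ⟪f s (x s) - f s (y s), x s - y s⟫ ≤ l * ‖x s - y s‖ ^ 2 :=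
      hW.inner_sub_le_of_inner_fderiv_le (fun z _ => hDf s z)
        (fun z hz => (hl s hsI z hz).inner_apply_self_le) (hyW s hsI) (hxW s hsI)
    have hdef : ⟪x s - y s, f s (y s) - y' s⟫ ≤ δ * ‖x s - y s‖ := by
      calc _ ≤ ‖x s - y s‖ * ‖f s (y s) - y' s‖ := real_inner_le_norm _ _
        _ ≤ ‖x s - y s‖ * δ := by gcongr; rw [norm_sub_rev]; exact hdefect s hsI
        _ = δ * ‖x s - y s‖ := mul_comm _ _
    rw [← sub_add_sub_cancel (f s (x s)) (f s (y s)), inner_add_right, real_inner_comm]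
    linarith
  have hzero : ∀ s ∈ Ico t0 t1, x s - y s = 0 → ‖f s (x s) - y' s‖ ≤ δ := by
    intro s hs hxy
    rw [sub_eq_zero.1 hxy, norm_sub_rev]
    exact hdefect s (Ico_subset_Icc_self hs)
  have h := norm_le_gronwallBound_of_inner_deriv_le (u := fun s => x s - y s)
    (fun s hs => (hx s hs).sub (hy s hs)) hinner hzero t ht
  rw [gronwallBound_of_K_ne_0 hl0] at h
  exact h.trans_eq (by beta_reduce; ring)

/-- Approximate-solution logarithmic norm estimate: if `x` solves
`x' = f(t,x)`, `y` is a `C¹` function with defect `‖y'(t) - f(t, y(t))‖ ≤ δ`,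
both curves stay in a convex set `W` on which the logarithmic norm of
`∂f/∂z` is bounded by `l ≠ 0`, then
`‖x(t) - y(t)‖ ≤ e^{l(t-t0)} ‖x(t0) - y(t0)‖ + δ (e^{l(t-t0)} - 1)/l`. -/
theorem lognorm_approx_solution_estimate {n : ℕ}
    (t0 t1 : ℝ)
    (f : ℝ → EuclideanSpace ℝ (Fin n) → EuclideanSpace ℝ (Fin n))
    (hfcont : Continuous (fun p : ℝ × EuclideanSpace ℝ (Fin n) => f p.1 p.2))
    (Df : ℝ → EuclideanSpace ℝ (Fin n) →
      (EuclideanSpace ℝ (Fin n) →L[ℝ] EuclideanSpace ℝ (Fin n)))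
    (hDf : ∀ t z, HasFDerivAt (f t) (Df t z) z)
    (W : Set (EuclideanSpace ℝ (Fin n))) (hW : Convex ℝ W)
    (l : ℝ) (hl0 : l ≠ 0)
    (hl : ∀ t ∈ Set.Icc t0 t1, ∀ z ∈ W, LogNormBoundedBy (Df t z) l)
    (x y : ℝ → EuclideanSpace ℝ (Fin n))
    (y' : ℝ → EuclideanSpace ℝ (Fin n))
    (δ : ℝ)
    (hx : ∀ t ∈ Set.Icc t0 t1, HasDerivAt x (f t (x t)) t)
    (hy : ∀ t ∈ Set.Icc t0 t1, HasDerivAt y (y' t) t)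
    (hdefect : ∀ t ∈ Set.Icc t0 t1, ‖y' t - f t (y t)‖ ≤ δ)
    (hxW : ∀ t ∈ Set.Icc t0 t1, x t ∈ W)
    (hyW : ∀ t ∈ Set.Icc t0 t1, y t ∈ W) :
    ∀ t ∈ Set.Icc t0 t1,
      ‖x t - y t‖ ≤ Real.exp (l * (t - t0)) * ‖x t0 - y t0‖ +
        δ * (Real.exp (l * (t - t0)) - 1) / l :=
  lognorm_approx_solution_estimate_general t0 t1 f Df hDf W hW l hl0 hl x y y' δ hx hy hdefect hxW
    hyW
end

section
/- Let $H$ be a Hilbert space with orthogonal projections $P_n$ converging strongly to the identity, let $K \subset H$ be compact and convex, and suppose for each $n$ the function $x^n : [t_0, t_1] \to K$ is differentiable with $\frac{d}{dt} x^n(t) = P_n F(t, x^n(t))$, where $F : [t_0,t_1] \times K \to H$ is continuous. If $x^n \to x$ uniformly on $[t_0,t_1]$ and $P_n F(t,u) \to F(t,u)$ uniformly on $[t_0,t_1] \times K$, then $x$ is differentiable and satisfies $\frac{dx}{dt}(t) = F(t, x(t))$ for all $t \in [t_0,t_1]$. -/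
/-!
The right-hand sides `P n (F t (x n t))` converge to `F t (xl t)` uniformly on `[t0, t1]`: `F` is
uniformly continuous on the compact set `[t0, t1] × K`, which contains the graphs of all `x n` and
of `xl`. On a convex set a pointwise limit of functions whose derivatives converge uniformly is
differentiable with the limiting derivative: by the mean value inequality, passed to the limit,
`xl - x N` is `ε`-Lipschitz once the derivatives of all later `x m` are `ε/2`-close to those of
`x N`, so near `t` the difference quotients of `xl` are within `ε` of those of `x N`.
-/

open Filter Topology

section UniformConvergence

variable {ι α β γ : Type*} [UniformSpace β] [UniformSpace γ] {p : Filter ι}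

theorem TendstoUniformlyOn.graph [UniformSpace α] {u : ι → α → β} {v : α → β} {T : Set α}
    (hu : TendstoUniformlyOn u v p T) :
    TendstoUniformlyOn (fun n a => (a, u n a)) (fun a => (a, v a)) p T := by
  have hid : TendstoUniformlyOn (fun (_ : ι) (a : α) => a) id p T :=
    fun _ hW => Eventually.of_forall fun _ _ _ => refl_mem_uniformity hW
  exact fun W hW => tendsto_diag.eventually (hid.prodMk hu W hW)

theorem TendstoUniformlyOn.comp_tendstoUniformlyOn {Φ : ι → β → γ} {φ : β → γ} {S : Set β}
    {u : ι → α → β} {v : α → β} {T : Set α} (hΦ : TendstoUniformlyOn Φ φ p S)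
    (hφ : UniformContinuousOn φ S) (hu : TendstoUniformlyOn u v p T)
    (huS : ∀ n, ∀ a ∈ T, u n a ∈ S) (hvS : ∀ a ∈ T, v a ∈ S) :
    TendstoUniformlyOn (fun n a => Φ n (u n a)) (fun a => φ (v a)) p T := by
  intro W hW
  obtain ⟨V, hV, hVW⟩ := comp_mem_uniformity_sets hW
  filter_upwards [hφ.comp_tendstoUniformlyOn_eventually (Eventually.of_forall huS) hvS hu V hV,
    hΦ V hV] with n hφu hΦu a ha
  exact hVW ⟨φ (u n a), hφu a ha, hΦu _ (huS n a ha)⟩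

end UniformConvergence

section UniformLimitDeriv

variable {ι 𝕜 E : Type*} [RCLike 𝕜] [NormedAddCommGroup E] [NormedSpace 𝕜 E] {l : Filter ι}
  {s : Set 𝕜} {f : ι → 𝕜 → E} {f' : ι → 𝕜 → E} {g : 𝕜 → E} {x y : 𝕜}

theorem Convex.norm_image_sub_le_of_tendsto_of_norm_hasDerivWithin_le [l.NeBot] {C : ℝ}
    (hs : Convex ℝ s) (hf : ∀ n, ∀ z ∈ s, HasDerivWithinAt (f n) (f' n z) s z)
    (hfg : ∀ z ∈ s, Tendsto (fun n => f n z) l (𝓝 (g z)))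
    (bound : ∀ᶠ n in l, ∀ z ∈ s, ‖f' n z‖ ≤ C) (hx : x ∈ s) (hy : y ∈ s) :
    ‖g y - g x‖ ≤ C * ‖y - x‖ := by
  refine le_of_tendsto ((hfg y hy).sub (hfg x hx)).norm ?_
  filter_upwards [bound] with n hn
  exact norm_image_sub_le_of_norm_hasDerivWithin_le (hf n) hn hs hx hy

theorem Convex.hasDerivWithinAt_of_tendstoUniformlyOn [l.NeBot] {g' : 𝕜 → E}
    (hs : Convex ℝ s) (hf' : TendstoUniformlyOn f' g' l s)
    (hf : ∀ n, ∀ z ∈ s, HasDerivWithinAt (f n) (f' n z) s z)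
    (hfg : ∀ z ∈ s, Tendsto (fun n => f n z) l (𝓝 (g z))) (hx : x ∈ s) :
    HasDerivWithinAt g (g' x) s x := by
  rw [hasDerivWithinAt_iff_isLittleO, Asymptotics.isLittleO_iff]
  intro c hc
  have hε : 0 < c / 4 := by positivity
  have hclose := Metric.tendstoUniformlyOn_iff.1 hf' (c / 4) hε
  obtain ⟨N, hN⟩ := hclose.exists
  have hlip : ∀ y ∈ s, ‖(g y - f N y) - (g x - f N x)‖ ≤ 2 * (c / 4) * ‖y - x‖ := by
    refine fun y hy => hs.norm_image_sub_le_of_tendsto_of_norm_hasDerivWithin_le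
      (f := fun m z => f m z - f N z) (fun m z hz => (hf m z hz).sub (hf N z hz))
      (fun z hz => (hfg z hz).sub tendsto_const_nhds) ?_ hx hy
    filter_upwards [hclose] with m hm z hz
    calc ‖f' m z - f' N z‖ ≤ dist (g' z) (f' m z) + dist (g' z) (f' N z) := by
          rw [← dist_eq_norm]; exact dist_triangle_left _ _ _
      _ ≤ 2 * (c / 4) := by linarith [hm z hz, hN z hz]
  filter_upwards [(hasDerivWithinAt_iff_isLittleO.1 (hf N x hx)).def hε,
    self_mem_nhdsWithin] with y hNy hy
  have hgap : ‖(y - x) • (f' N x - g' x)‖ ≤ c / 4 * ‖y - x‖ := by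
    rw [norm_smul, mul_comm, ← dist_eq_norm, dist_comm]
    exact mul_le_mul_of_nonneg_right (hN x hx).le (norm_nonneg _)
  calc ‖g y - g x - (y - x) • g' x‖
      = ‖((g y - f N y) - (g x - f N x)) + (f N y - f N x - (y - x) • f' N x)
          + (y - x) • (f' N x - g' x)‖ := by congr 1; module
    _ ≤ 2 * (c / 4) * ‖y - x‖ + c / 4 * ‖y - x‖ + c / 4 * ‖y - x‖ :=
        (norm_add₃_le ..).trans (add_le_add_three (hlip y hy) hNy hgap)
    _ = c * ‖y - x‖ := by ring

end UniformLimitDeriv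

theorem limit_of_galerkin_solutions_general
    {H : Type*} [NormedAddCommGroup H] [InnerProductSpace ℝ H]
    (t0 t1 : ℝ)
    (K : Set H) (hKcomp : IsCompact K)
    (P : ℕ → H →L[ℝ] H)
    (F : ℝ → H → H)
    (hF : ContinuousOn (fun p : ℝ × H => F p.1 p.2) (Set.Icc t0 t1 ×ˢ K))
    (x : ℕ → ℝ → H) (xl : ℝ → H)
    (hxK : ∀ n, ∀ t ∈ Set.Icc t0 t1, x n t ∈ K)
    (hderiv : ∀ n, ∀ t ∈ Set.Icc t0 t1,
      HasDerivWithinAt (x n) (P n (F t (x n t))) (Set.Icc t0 t1) t)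
    (hxconv : TendstoUniformlyOn x xl atTop (Set.Icc t0 t1))
    (hPFconv : TendstoUniformlyOn (fun n (p : ℝ × H) => P n (F p.1 p.2))
      (fun p : ℝ × H => F p.1 p.2) atTop (Set.Icc t0 t1 ×ˢ K)) :
    ∀ t ∈ Set.Icc t0 t1,
      HasDerivWithinAt xl (F t (xl t)) (Set.Icc t0 t1) t := by
  have hxl : ∀ t ∈ Set.Icc t0 t1, Tendsto (fun n => x n t) atTop (𝓝 (xl t)) :=
    fun t ht => hxconv.tendsto_at ht
  have hxlK : ∀ t ∈ Set.Icc t0 t1, xl t ∈ K := fun t ht =>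
    hKcomp.isClosed.mem_of_tendsto (hxl t ht) (Eventually.of_forall fun n => hxK n t ht)
  have hrhs : TendstoUniformlyOn (fun n t => P n (F t (x n t))) (fun t => F t (xl t)) atTop
      (Set.Icc t0 t1) :=
    hPFconv.comp_tendstoUniformlyOn
      ((isCompact_Icc.prod hKcomp).uniformContinuousOn_of_continuous hF) hxconv.graph
      (fun n t ht => ⟨ht, hxK n t ht⟩) (fun t ht => ⟨ht, hxlK t ht⟩)
  exact fun t ht => (convex_Icc t0 t1).hasDerivWithinAt_of_tendstoUniformlyOn hrhs hderiv hxl ht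

/-- Limit passage for Galerkin solutions: if `x^n` solve
`(x^n)' = P_n F(t, x^n)` in a compact convex set `K`, the projections `P n`
converge strongly to the identity, `x^n → x` uniformly, and
`P_n F → F` uniformly on `[t0,t1] × K`, then `x' = F(t, x)` on `[t0,t1]`. -/
theorem limit_of_galerkin_solutions
    {H : Type*} [NormedAddCommGroup H] [InnerProductSpace ℝ H] [CompleteSpace H]
    (t0 t1 : ℝ) (ht : t0 ≤ t1)
    (K : Set H) (hKcomp : IsCompact K) (hKconv : Convex ℝ K)
    (P : ℕ → H →L[ℝ] H)
    (hPstrong : ∀ v : H, Tendsto (fun n => P n v) atTop (nhds v))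
    (F : ℝ → H → H)
    (hF : ContinuousOn (fun p : ℝ × H => F p.1 p.2) (Set.Icc t0 t1 ×ˢ K))
    (x : ℕ → ℝ → H) (xl : ℝ → H)
    (hxK : ∀ n, ∀ t ∈ Set.Icc t0 t1, x n t ∈ K)
    (hderiv : ∀ n, ∀ t ∈ Set.Icc t0 t1,
      HasDerivWithinAt (x n) (P n (F t (x n t))) (Set.Icc t0 t1) t)
    (hxconv : TendstoUniformlyOn x xl atTop (Set.Icc t0 t1))
    (hPFconv : TendstoUniformlyOn (fun n (p : ℝ × H) => P n (F p.1 p.2))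
      (fun p : ℝ × H => F p.1 p.2) atTop (Set.Icc t0 t1 ×ˢ K)) :
    ∀ t ∈ Set.Icc t0 t1,
      HasDerivWithinAt xl (F t (xl t)) (Set.Icc t0 t1) t :=
  limit_of_galerkin_solutions_general t0 t1 K hKcomp P F hF x xl hxK hderiv hxconv hPFconv
end
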